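/- Let n ≥ 1 and N = n(n+1)/2, and let {Q̂_α}_{α=1}^N be any orthonormal basis of SM(n). Then for any index α ∈ {1,...,N} and any subset J ⊆ {1,...,N}, Σ_{β∈J} (‖[Q̂_α, Q̂_β]‖² − 1) ≤ 1. -/

import Mathlib

/-!
Diagonalize `Q α = U diag(d) Uᵀ` with `U` orthogonal and `∑ dᵢ² = 1`, and conjugate the whole
basis: the matrices `Bβ = Uᵀ Qβ U` are again orthonormal and symmetric, and
`‖[Q α, Q β]‖² = ∑ᵢⱼ (dᵢ - dⱼ)² (Bβ)ᵢⱼ²`. As every `Bβ` is a unit vector, the sum to bound is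
`∑ᵢⱼ ((dᵢ - dⱼ)² - 1) Tᵢⱼ` with `Tᵢⱼ = ∑_{β ∈ J} (Bβ)ᵢⱼ²`, and Bessel's inequality for the unit
vector `(Eᵢⱼ + Eⱼᵢ)/√2` gives `Tᵢⱼ ≤ 1/2` for `i ≠ j`. It therefore suffices that
`∑_{(i,j) ∈ s} ((dᵢ - dⱼ)² - 1) ≤ 1` for every set `s` of pairs `i < j`. This holds for the inner
products of any vector of norm at most `1` with any family of vectors of squared norm at most `2`
and pairwise inner products in `[-1, 1]`, such as the `eᵢ - eⱼ`.
-/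

open Matrix BigOperators

/-- The squared Frobenius norm: sum of squares of the entries. -/
noncomputable def frobSq {n : ℕ} (A : Matrix (Fin n) (Fin n) ℝ) : ℝ :=
  ∑ i, ∑ j, (A i j) ^ 2

/-- The commutator of two matrices. -/
def mcomm {n : ℕ} (A B : Matrix (Fin n) (Fin n) ℝ) : Matrix (Fin n) (Fin n) ℝ :=
  A * B - B * A

open Finset
open scoped RealInnerProductSpace

section NearlyOrthogonal

variable {E ι : Type*} [NormedAddCommGroup E] [InnerProductSpace ℝ E] {s : Finset ι} {w : ι → E}

theorem norm_sum_smul_sq_le (hw : ∀ p ∈ s, ‖w p‖ ^ 2 ≤ 2)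
    (hww : ∀ p ∈ s, ∀ q ∈ s, p ≠ q → |⟪w p, w q⟫| ≤ 1) (c : ι → ℝ) :
    ‖∑ p ∈ s, c p • w p‖ ^ 2 ≤ ∑ p ∈ s, c p ^ 2 + (∑ p ∈ s, |c p|) ^ 2 := by
  classical
  have hterm : ∀ p ∈ s, ∀ q ∈ s,
      c p * c q * ⟪w p, w q⟫ ≤ (if p = q then c p ^ 2 else 0) + |c p| * |c q| := by
    intro p hp q hq
    rcases eq_or_ne p q with rfl | hpq
    · rw [if_pos rfl, abs_mul_abs_self, real_inner_self_eq_norm_sq]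
      nlinarith [mul_le_mul_of_nonneg_left (hw p hp) (mul_self_nonneg (c p))]
    · rw [if_neg hpq, zero_add]
      calc c p * c q * ⟪w p, w q⟫ ≤ |c p * c q * ⟪w p, w q⟫| := le_abs_self _
        _ = |c p| * |c q| * |⟪w p, w q⟫| := by rw [abs_mul, abs_mul]
        _ ≤ |c p| * |c q| := mul_le_of_le_one_right (by positivity) (hww p hp q hq hpq)
  calc ‖∑ p ∈ s, c p • w p‖ ^ 2 = ∑ p ∈ s, ∑ q ∈ s, c p * c q * ⟪w p, w q⟫ := by
        simp only [← real_inner_self_eq_norm_sq, sum_inner, inner_sum, real_inner_smul_left,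
          real_inner_smul_right]
        exact sum_congr rfl fun p _ => sum_congr rfl fun q _ => by rw [real_inner_comm]; ring
    _ ≤ ∑ p ∈ s, ∑ q ∈ s, ((if p = q then c p ^ 2 else 0) + |c p| * |c q|) :=
        sum_le_sum fun p hp => sum_le_sum fun q hq => hterm p hp q hq
    _ = ∑ p ∈ s, c p ^ 2 + (∑ p ∈ s, |c p|) ^ 2 := by
        simp only [sum_add_distrib, sum_ite_eq, ← mul_sum, ← sum_mul, sq (∑ p ∈ s, |c p|),
          sum_ite_mem, inter_self]

/-- Writing `S = ∑ ⟪x, w p⟫²`, the vector `v = ∑ ⟪x, w p⟫ • w p` has `⟪x, v⟫ = S`, while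
`‖v‖² ≤ S + (∑ |⟪x, w p⟫|)² ≤ (#s + 1) S`; Cauchy–Schwarz then gives `S ≤ #s + 1`. -/
theorem sum_inner_sq_sub_one_le_one {x : E} (hx : ‖x‖ ≤ 1) (hw : ∀ p ∈ s, ‖w p‖ ^ 2 ≤ 2)
    (hww : ∀ p ∈ s, ∀ q ∈ s, p ≠ q → |⟪w p, w q⟫| ≤ 1) :
    ∑ p ∈ s, (⟪x, w p⟫ ^ 2 - 1) ≤ 1 := by
  set c : ι → ℝ := fun p => ⟪x, w p⟫
  set S := ∑ p ∈ s, c p ^ 2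
  set v := ∑ p ∈ s, c p • w p
  have hS : S = ⟪x, v⟫ := by
    simp only [v, inner_sum, real_inner_smul_right, S, c, sq]
  have hSv : S ≤ ‖v‖ := by
    rw [hS]
    exact (real_inner_le_norm x v).trans (mul_le_of_le_one_left (norm_nonneg v) hx)
  have hv : ‖v‖ ^ 2 ≤ (#s + 1) * S := by
    have hcs : (∑ p ∈ s, |c p|) ^ 2 ≤ #s * S := by
      simpa only [sq_abs] using sq_sum_le_card_mul_sum_sq (s := s) (f := fun p => |c p|)
    linarith [norm_sum_smul_sq_le hw hww c]
  have hS0 : 0 ≤ S := sum_nonneg fun p _ => sq_nonneg _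
  have hSle : S ≤ #s + 1 := by
    rcases hS0.eq_or_lt with h | h
    · rw [← h]; positivity
    · nlinarith [pow_le_pow_left₀ hS0 hSv 2]
  rw [sum_sub_distrib, sum_const, nsmul_one]
  linarith

end NearlyOrthogonal

section Pairs

variable {ι : Type*} [Fintype ι] [LinearOrder ι]

theorem abs_inner_single_sub_single_le_one {i j k l : ι} (hij : i < j) (hkl : k < l)
    (hne : (i, j) ≠ (k, l)) :
    |⟪EuclideanSpace.single i (1 : ℝ) - EuclideanSpace.single j 1,
      EuclideanSpace.single k (1 : ℝ) - EuclideanSpace.single l 1⟫| ≤ 1 := by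
  simp only [inner_sub_left, inner_sub_right, EuclideanSpace.inner_single_left, PiLp.single_apply]
  simp only [Prod.mk.injEq, ne_eq] at hne
  split_ifs <;> subst_vars <;> first | exact (hne ⟨rfl, rfl⟩).elim | order | norm_num

theorem norm_single_sub_single_sq {i j : ι} (hij : i ≠ j) :
    ‖EuclideanSpace.single i (1 : ℝ) - EuclideanSpace.single j 1‖ ^ 2 = 2 := by
  rw [norm_sub_sq_real, PiLp.norm_single, PiLp.norm_single,
    EuclideanSpace.inner_single_left, PiLp.single_apply, if_neg hij]
  norm_num

theorem sum_sq_sub_sub_one_le_one {d : ι → ℝ} (hd : ∑ i, d i ^ 2 ≤ 1) {s : Finset (ι × ι)}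
    (hs : ∀ p ∈ s, p.1 < p.2) : ∑ p ∈ s, ((d p.1 - d p.2) ^ 2 - 1) ≤ 1 := by
  set w : ι × ι → EuclideanSpace ℝ ι :=
    fun p => EuclideanSpace.single p.1 1 - EuclideanSpace.single p.2 1
  have hx : ‖WithLp.toLp 2 d‖ ≤ 1 := by
    rw [← sq_le_one_iff₀ (norm_nonneg _), EuclideanSpace.real_norm_sq_eq]
    simpa using hd
  have hinner : ∀ p, ⟪WithLp.toLp 2 d, w p⟫ = d p.1 - d p.2 := by
    simp [w, inner_sub_right, EuclideanSpace.inner_single_right]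
  have hw : ∀ p ∈ s, ‖w p‖ ^ 2 ≤ 2 := fun p hp =>
    (norm_single_sub_single_sq (hs p hp).ne).le
  have hww : ∀ p ∈ s, ∀ q ∈ s, p ≠ q → |⟪w p, w q⟫| ≤ 1 := fun p hp q hq hpq =>
    abs_inner_single_sub_single_le_one (hs p hp) (hs q hq) hpq
  simpa only [hinner] using sum_inner_sq_sub_one_le_one hx hw hww

theorem sum_sum_lt_sq_sub_sub_one_mul_le_one {d : ι → ℝ} (hd : ∑ i, d i ^ 2 ≤ 1)
    {t : ι → ι → ℝ} (ht₀ : ∀ i j, i < j → 0 ≤ t i j) (ht₁ : ∀ i j, i < j → t i j ≤ 1) :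
    ∑ i, ∑ j, (if i < j then ((d i - d j) ^ 2 - 1) * t i j else 0) ≤ 1 := by
  classical
  calc ∑ i, ∑ j, (if i < j then ((d i - d j) ^ 2 - 1) * t i j else 0)
      ≤ ∑ i, ∑ j, (if i < j ∧ 1 < (d i - d j) ^ 2 then (d i - d j) ^ 2 - 1 else 0) := by
        gcongr with i _ j _
        by_cases hij : i < j
        · by_cases hgap : 1 < (d i - d j) ^ 2
          · rw [if_pos hij, if_pos ⟨hij, hgap⟩]
            exact mul_le_of_le_one_right (by linarith) (ht₁ i j hij)
          · rw [if_pos hij, if_neg fun h => hgap h.2]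
            exact mul_nonpos_of_nonpos_of_nonneg (by linarith) (ht₀ i j hij)
        · rw [if_neg hij, if_neg fun h => hij h.1]
    _ = ∑ p ∈ univ.filter (fun p : ι × ι => p.1 < p.2 ∧ 1 < (d p.1 - d p.2) ^ 2),
          ((d p.1 - d p.2) ^ 2 - 1) := by
        rw [sum_filter, Fintype.sum_prod_type]
    _ ≤ 1 := sum_sq_sub_sub_one_le_one hd fun p hp => (mem_filter.mp hp).2.1

theorem sum_sum_le_two_mul_sum_sum_lt {g : ι → ι → ℝ} (hg : ∀ i j, g j i = g i j)
    (hdiag : ∀ i, g i i ≤ 0) :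
    ∑ i, ∑ j, g i j ≤ 2 * ∑ i, ∑ j, if i < j then g i j else 0 := by
  calc ∑ i, ∑ j, g i j
      ≤ ∑ i, ∑ j, ((if i < j then g i j else 0) + (if j < i then g i j else 0)) := by
        gcongr with i _ j _
        rcases lt_trichotomy i j with h | rfl | h
        · simp [h, h.not_gt]
        · simp [hdiag]
        · simp [h, h.not_gt]
    _ = 2 * ∑ i, ∑ j, if i < j then g i j else 0 := by
        simp only [sum_add_distrib]
        rw [two_mul, sum_comm (f := fun i j => if j < i then g i j else 0)]
        simp only [hg]

end Pairs

section Frobenius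

variable {m n κ : Type*} [Fintype m] [Fintype n]

noncomputable def frobVec (A : Matrix m n ℝ) : EuclideanSpace ℝ (n × m) :=
  WithLp.toLp 2 A.vec

theorem inner_frobVec_eq_trace (A B : Matrix m n ℝ) :
    ⟪frobVec A, frobVec B⟫ = (Aᵀ * B).trace := by
  rw [frobVec, frobVec, EuclideanSpace.inner_toLp_toLp, star_trivial, dotProduct_comm,
    vec_dotProduct_vec]

theorem inner_frobVec (A B : Matrix m n ℝ) :
    ⟪frobVec A, frobVec B⟫ = ∑ i, ∑ j, A i j * B i j := by
  rw [inner_frobVec_eq_trace, trace, sum_comm]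
  simp [mul_apply]

theorem norm_frobVec_sq (A : Matrix m n ℝ) : ‖frobVec A‖ ^ 2 = ∑ i, ∑ j, A i j ^ 2 := by
  rw [← real_inner_self_eq_norm_sq, inner_frobVec]
  simp only [sq]

variable [DecidableEq n]

theorem inner_frobVec_conj {U : Matrix n n ℝ} (hU : Uᵀ * U = 1) (A B : Matrix n n ℝ) :
    ⟪frobVec (U * A * Uᵀ), frobVec (U * B * Uᵀ)⟫ = ⟪frobVec A, frobVec B⟫ := by
  rw [inner_frobVec_eq_trace, inner_frobVec_eq_trace]
  calc ((U * A * Uᵀ)ᵀ * (U * B * Uᵀ)).trace = (U * (Aᵀ * B) * Uᵀ).trace := by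
        simp only [transpose_mul, transpose_transpose, Matrix.mul_assoc]
        rw [← Matrix.mul_assoc Uᵀ U, hU, Matrix.one_mul]
    _ = (Aᵀ * B).trace := by rw [trace_mul_comm, ← Matrix.mul_assoc, hU, Matrix.one_mul]

theorem sum_sq_apply_le_half {B : κ → Matrix n n ℝ} (hB : ∀ β, (B β).IsSymm)
    (hBo : Orthonormal ℝ fun β => frobVec (B β)) (J : Finset κ) {i j : n} (hij : i ≠ j) :
    ∑ β ∈ J, B β i j ^ 2 ≤ 1 / 2 := by
  set x : EuclideanSpace ℝ (n × n) :=
    EuclideanSpace.single (j, i) 1 + EuclideanSpace.single (i, j) 1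
  have hx : ‖x‖ ^ 2 = 2 := by
    rw [norm_add_sq_real, PiLp.norm_single, PiLp.norm_single, EuclideanSpace.inner_single_left,
      PiLp.single_apply, if_neg fun h => hij (Prod.ext_iff.mp h).1.symm]
    norm_num
  have hBx : ∀ β, ⟪frobVec (B β), x⟫ = 2 * B β i j := by
    intro β
    simp only [x, inner_add_right, EuclideanSpace.inner_single_right, frobVec, vec, conj_trivial,
      one_mul]
    rw [(hB β).apply i j, two_mul]
  have hbessel := hBo.sum_inner_products_le x (s := J)
  simp only [hBx, hx, Real.norm_eq_abs, sq_abs, mul_pow, ← mul_sum] at hbessel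
  linarith

variable [LinearOrder n]

theorem sum_sum_sq_sub_mul_sq_sub_one_le_one {d : n → ℝ} (hd : ∑ i, d i ^ 2 ≤ 1)
    {B : κ → Matrix n n ℝ} (hB : ∀ β, (B β).IsSymm) (hBo : Orthonormal ℝ fun β => frobVec (B β))
    (J : Finset κ) : ∑ β ∈ J, (∑ i, ∑ j, (d i - d j) ^ 2 * B β i j ^ 2 - 1) ≤ 1 := by
  set T : n → n → ℝ := fun i j => ∑ β ∈ J, B β i j ^ 2
  have hunit : ∀ β, ∑ i, ∑ j, B β i j ^ 2 = 1 := by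
    intro β
    rw [← norm_frobVec_sq, hBo.1 β, one_pow]
  have hT : ∀ i j, T j i = T i j := fun i j => sum_congr rfl fun β _ => by rw [(hB β).apply i j]
  calc ∑ β ∈ J, (∑ i, ∑ j, (d i - d j) ^ 2 * B β i j ^ 2 - 1)
      = ∑ β ∈ J, ∑ i, ∑ j, ((d i - d j) ^ 2 - 1) * B β i j ^ 2 := by
        refine sum_congr rfl fun β _ => ?_
        simp only [sub_mul, one_mul, sum_sub_distrib, hunit]
    _ = ∑ i, ∑ j, ((d i - d j) ^ 2 - 1) * T i j := by
        simp only [T, mul_sum]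
        rw [sum_comm]
        exact sum_congr rfl fun i _ => sum_comm
    _ ≤ 2 * ∑ i, ∑ j, if i < j then ((d i - d j) ^ 2 - 1) * T i j else 0 := by
        refine sum_sum_le_two_mul_sum_sum_lt (fun i j => by rw [hT, ← neg_sub (d i), neg_sq])
          fun i => ?_
        rw [sub_self]
        exact mul_nonpos_of_nonpos_of_nonneg (by norm_num) (sum_nonneg fun β _ => sq_nonneg _)
    _ = ∑ i, ∑ j, if i < j then ((d i - d j) ^ 2 - 1) * (2 * T i j) else 0 := by
        simp only [mul_sum, mul_ite, mul_zero]
        exact sum_congr rfl fun i _ => sum_congr rfl fun j _ => by congr 1; ring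
    _ ≤ 1 := sum_sum_lt_sq_sub_sub_one_mul_le_one hd
        (fun i j _ => by positivity) fun i j hij => by
          linarith [sum_sq_apply_le_half hB hBo J hij.ne]

end Frobenius

theorem Matrix.IsSymm.exists_orthogonal_diagonal {n : Type*} [Fintype n] [DecidableEq n]
    {A : Matrix n n ℝ} (hA : A.IsSymm) :
    ∃ (U : Matrix n n ℝ) (d : n → ℝ), Uᵀ * U = 1 ∧ A = U * diagonal d * Uᵀ := by
  have hA' : A.IsHermitian := by
    rwa [IsHermitian, conjTranspose_eq_transpose_of_trivial]
  refine ⟨hA'.eigenvectorUnitary, hA'.eigenvalues, ?_, ?_⟩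
  · rw [← conjTranspose_eq_transpose_of_trivial, ← star_eq_conjTranspose,
      Unitary.coe_star_mul_self]
  · conv_lhs => rw [hA'.spectral_theorem]
    simp [RCLike.ofReal_real_eq_id, star_eq_conjTranspose]

section Commutator

variable {n : ℕ}

theorem frobSq_eq_norm_frobVec_sq (A : Matrix (Fin n) (Fin n) ℝ) : frobSq A = ‖frobVec A‖ ^ 2 :=
  (norm_frobVec_sq A).symm

theorem frobSq_conj {U : Matrix (Fin n) (Fin n) ℝ} (hU : Uᵀ * U = 1)
    (A : Matrix (Fin n) (Fin n) ℝ) :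
    frobSq (U * A * Uᵀ) = frobSq A := by
  rw [frobSq_eq_norm_frobVec_sq, frobSq_eq_norm_frobVec_sq, ← real_inner_self_eq_norm_sq,
    ← real_inner_self_eq_norm_sq, inner_frobVec_conj hU]

theorem mcomm_conj {U : Matrix (Fin n) (Fin n) ℝ} (hU : Uᵀ * U = 1)
    (A B : Matrix (Fin n) (Fin n) ℝ) :
    mcomm (U * A * Uᵀ) (U * B * Uᵀ) = U * mcomm A B * Uᵀ := by
  have h : ∀ X Y : Matrix (Fin n) (Fin n) ℝ, U * X * Uᵀ * (U * Y * Uᵀ) = U * (X * Y) * Uᵀ := by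
    intro X Y
    simp only [Matrix.mul_assoc]
    rw [← Matrix.mul_assoc Uᵀ U, hU, Matrix.one_mul]
  rw [mcomm, mcomm, h, h, Matrix.mul_sub, Matrix.sub_mul]

theorem frobSq_mcomm_diagonal (d : Fin n → ℝ) (B : Matrix (Fin n) (Fin n) ℝ) :
    frobSq (mcomm (diagonal d) B) = ∑ i, ∑ j, (d i - d j) ^ 2 * B i j ^ 2 := by
  simp only [frobSq, mcomm, Matrix.sub_apply, diagonal_mul, mul_diagonal]
  exact sum_congr rfl fun i _ => sum_congr rfl fun j _ => by ring

end Commutator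

theorem commutator_gap_sum_le_one_general (n N : ℕ)
    (Q : Fin N → Matrix (Fin n) (Fin n) ℝ) (hsymm : ∀ α, (Q α).IsSymm)
    (horth : ∀ α β, (∑ i, ∑ j, Q α i j * Q β i j) = if α = β then 1 else 0)
    (α : Fin N) (J : Finset (Fin N)) :
    ∑ β ∈ J, (frobSq (mcomm (Q α) (Q β)) - 1) ≤ 1 := by
  obtain ⟨U, d, hU, hQα⟩ := (hsymm α).exists_orthogonal_diagonal
  set B : Fin N → Matrix (Fin n) (Fin n) ℝ := fun β => Uᵀ * Q β * U
  have hQB : ∀ β, Q β = U * B β * Uᵀ := by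
    intro β
    have hU' : U * Uᵀ = 1 := mul_eq_one_comm.mp hU
    simp only [B, ← Matrix.mul_assoc, hU', Matrix.one_mul]
    rw [Matrix.mul_assoc, hU', Matrix.mul_one]
  have hBs : ∀ β, (B β).IsSymm := fun β => by
    simp only [B, IsSymm, transpose_mul, transpose_transpose, (hsymm β).eq, Matrix.mul_assoc]
  have hBo : Orthonormal ℝ fun β => frobVec (B β) := by
    refine orthonormal_iff_ite.mpr fun β γ => ?_
    rw [← inner_frobVec_conj hU, ← hQB, ← hQB, inner_frobVec, horth]
  have hd : ∑ i, d i ^ 2 = 1 := by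
    have h : frobSq (diagonal d) = 1 := by
      rw [← frobSq_conj hU, ← hQα, frobSq_eq_norm_frobVec_sq, ← real_inner_self_eq_norm_sq,
        inner_frobVec, horth, if_pos rfl]
    simpa [frobSq, diagonal_apply] using h
  calc ∑ β ∈ J, (frobSq (mcomm (Q α) (Q β)) - 1)
      = ∑ β ∈ J, (∑ i, ∑ j, (d i - d j) ^ 2 * B β i j ^ 2 - 1) := by
        refine sum_congr rfl fun β _ => ?_
        rw [hQα, hQB β, mcomm_conj hU, frobSq_conj hU, frobSq_mcomm_diagonal]
    _ ≤ 1 := sum_sum_sq_sub_mul_sq_sub_one_le_one hd.le hBs hBo J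

/-- Lemma 2.3: for any orthonormal basis `{Q̂_α}` of the space of `n×n` real symmetric
matrices (`N = n(n+1)/2`), any index `α` and any subset `J` of indices,
`∑_{β∈J} (‖[Q̂_α, Q̂_β]‖² − 1) ≤ 1`. -/
theorem commutator_gap_sum_le_one (n N : ℕ) (hn : 1 ≤ n) (hN : N = n * (n + 1) / 2)
    (Q : Fin N → Matrix (Fin n) (Fin n) ℝ) (hsymm : ∀ α, (Q α).IsSymm)
    (horth : ∀ α β, (∑ i, ∑ j, Q α i j * Q β i j) = if α = β then 1 else 0)
    (α : Fin N) (J : Finset (Fin N)) :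
    ∑ β ∈ J, (frobSq (mcomm (Q α) (Q β)) - 1) ≤ 1 :=
  commutator_gap_sum_le_one_general n N Q hsymm horth α J
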